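/- arXiv:2106.08636 — 3 statements merged into one kernel-verified Lean document; each statement's English description precedes it below -/
import Mathlib

section
/- The function f(p₁, p₂) = log(1 + p₁h₁) + log(1 + p₂h₂/(p₁h₂ + 1)) with h₁ ≥ h₂ > 0, defined for p₁, p₂ ≥ 0, satisfies f(p₁,p₂) = log(1 + (p₁+p₂)h₂) + log((1+(p₁)h₁)/(1+p₁h₂)), and hence for fixed total power q = p₁ + p₂, f is nondecreasing in p₁. -/
/-!
Since `1 + p₂h₂/(p₁h₂ + 1) = (1 + (p₁ + p₂)h₂)/(1 + p₁h₂)`, the two logarithms can trade numerators,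
which gives the identity. At fixed total power `q` the first term `log (1 + q h₂)` is then constant,
and the ratio `(1 + p₁h₁)/(1 + p₁h₂)` is nondecreasing in `p₁` because `h₂ ≤ h₁`.
-/

open Real Set

lemma Real.log_add_log_div_comm {a b c : ℝ} (ha : a ≠ 0) (hb : b ≠ 0) (hc : c ≠ 0) :
    log a + log (b / c) = log b + log (a / c) := by
  rw [log_div hb hc, log_div ha hc]
  ring

lemma monotoneOn_one_add_mul_div_one_add_mul {a b : ℝ} (hb : 0 ≤ b) (hba : b ≤ a) :
    MonotoneOn (fun x : ℝ => (1 + x * a) / (1 + x * b)) (Ici 0) := by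
  intro x (hx : 0 ≤ x) y (hy : 0 ≤ y) hxy
  rw [div_le_div_iff₀ (by positivity) (by positivity)]
  nlinarith [mul_nonneg (sub_nonneg.2 hxy) (sub_nonneg.2 hba)]

lemma log_one_add_mul_add_log_one_add_div_eq {h1 h2 p1 p2 : ℝ} (hh1 : 0 ≤ h1) (hh2 : 0 ≤ h2)
    (hp1 : 0 ≤ p1) (hp2 : 0 ≤ p2) :
    log (1 + p1 * h1) + log (1 + p2 * h2 / (p1 * h2 + 1))
      = log (1 + (p1 + p2) * h2) + log ((1 + p1 * h1) / (1 + p1 * h2)) := by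
  have hratio : 1 + p2 * h2 / (p1 * h2 + 1) = (1 + (p1 + p2) * h2) / (1 + p1 * h2) := by
    rw [one_add_div (by positivity)]
    ring_nf
  rw [hratio]
  exact log_add_log_div_comm (by positivity) (by positivity) (by positivity)

/-- Two-user NOMA sum-rate: algebraic identity and monotonicity in the
cluster-head power `p₁` for fixed total power `q`. -/
theorem noma_two_user_sum_rate_identity_and_monotone
    (h1 h2 : ℝ) (hh2 : 0 < h2) (hle : h2 ≤ h1) :
    (∀ p1 p2 : ℝ, 0 ≤ p1 → 0 ≤ p2 →
      Real.log (1 + p1 * h1) + Real.log (1 + p2 * h2 / (p1 * h2 + 1))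
        = Real.log (1 + (p1 + p2) * h2)
          + Real.log ((1 + p1 * h1) / (1 + p1 * h2))) ∧
    (∀ q p1 p1' : ℝ, 0 ≤ p1 → p1 ≤ p1' → p1' ≤ q →
      Real.log (1 + p1 * h1) + Real.log (1 + (q - p1) * h2 / (p1 * h2 + 1))
        ≤ Real.log (1 + p1' * h1)
          + Real.log (1 + (q - p1') * h2 / (p1' * h2 + 1))) := by
  have hh1 : 0 ≤ h1 := hh2.le.trans hle
  have identity := fun p1 p2 (hp1 : 0 ≤ p1) (hp2 : 0 ≤ p2) =>
    log_one_add_mul_add_log_one_add_div_eq hh1 hh2.le hp1 hp2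
  refine ⟨identity, fun q p1 p1' hp1 hp1p1' hp1'q => ?_⟩
  have hp1' : 0 ≤ p1' := hp1.trans hp1p1'
  rw [identity p1 (q - p1) hp1 (by linarith), identity p1' (q - p1') hp1' (by linarith),
    add_sub_cancel, add_sub_cancel]
  have hratio := monotoneOn_one_add_mul_div_one_add_mul hh2.le hle hp1 hp1' hp1p1'
  gcongr
end

section
/- The function (p₁,p₂) ↦ log(1+p₁h₁) + log(1 + p₂h₂/(p₁h₂+1)) on {(p₁,p₂) : p₁ ≥ 0, p₂ ≥ 0} is concave, where h₁ ≥ h₂ > 0. -/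
/-!
The sum-rate equals `log (1 + (p₁ + p₂)h₂) + (log (1 + p₁h₁) - log (1 + p₁h₂))`.
The first term is a concave function of the linear form `p₁ + p₂`. The second is a concave
function of `p₁`, because its derivative `(h₁ - h₂) / ((1 + p₁h₁)(1 + p₁h₂))` is antitone
when `h₁ ≥ h₂ ≥ 0`.
-/

open Set Real

lemma log_one_add_div_eq_sub {u v : ℝ} (hu : 0 < u) (huv : 0 < u + v) :
    log (1 + v / u) = log (u + v) - log u := by
  rw [← log_div huv.ne' hu.ne', add_div, div_self hu.ne']

section LogRatio

variable {a b : ℝ}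

lemma hasDerivAt_log_one_add_mul_sub {x : ℝ} (hxa : 0 < 1 + x * a) (hxb : 0 < 1 + x * b) :
    HasDerivAt (fun x => log (1 + x * a) - log (1 + x * b))
      ((a - b) / ((1 + x * a) * (1 + x * b))) x := by
  have hlin : ∀ c : ℝ, HasDerivAt (fun x : ℝ => 1 + x * c) c x := fun c => by
    simpa using ((hasDerivAt_id x).mul_const c).const_add 1
  refine (((hlin a).log hxa.ne').sub ((hlin b).log hxb.ne')).congr_deriv ?_
  rw [div_sub_div _ _ hxa.ne' hxb.ne']
  ring

lemma concaveOn_log_one_add_mul_sub (hb : 0 ≤ b) (hba : b ≤ a) :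
    ConcaveOn ℝ (Ici 0) fun x => log (1 + x * a) - log (1 + x * b) := by
  have ha : 0 ≤ a := hb.trans hba
  have hpos : ∀ c, 0 ≤ c → ∀ x ∈ Ici (0 : ℝ), 0 < 1 + x * c := fun c hc x (hx : 0 ≤ x) => by
    positivity
  have hderiv : ∀ x ∈ Ici (0 : ℝ), HasDerivAt (fun x => log (1 + x * a) - log (1 + x * b))
      ((a - b) / ((1 + x * a) * (1 + x * b))) x := fun x hx =>
    hasDerivAt_log_one_add_mul_sub (hpos a ha x hx) (hpos b hb x hx)
  refine AntitoneOn.concaveOn_of_deriv (convex_Ici 0)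
    (fun x hx => (hderiv x hx).continuousAt.continuousWithinAt)
    (fun x hx => (hderiv x (interior_subset hx)).differentiableAt.differentiableWithinAt) ?_
  intro x hx y hy hxy
  rw [(hderiv x (interior_subset hx)).deriv, (hderiv y (interior_subset hy)).deriv]
  have hxa := hpos a ha x (interior_subset hx)
  have hxb := hpos b hb x (interior_subset hx)
  have hya := hpos a ha y (interior_subset hy)
  refine div_le_div_of_nonneg_left (sub_nonneg.2 hba) (mul_pos hxa hxb) ?_
  exact mul_le_mul (by gcongr) (by gcongr) hxb.le hya.le

lemma concaveOn_log_one_add_mul (ha : 0 ≤ a) : ConcaveOn ℝ (Ici 0) fun x => log (1 + x * a) := by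
  simpa using concaveOn_log_one_add_mul_sub le_rfl ha

end LogRatio

/-- Concavity of the two-user SC-SIC sum-rate on the nonnegative quadrant. -/
theorem noma_two_user_sum_rate_concave
    (h1 h2 : ℝ) (hh2 : 0 < h2) (hle : h2 ≤ h1) :
    ConcaveOn ℝ {p : ℝ × ℝ | 0 ≤ p.1 ∧ 0 ≤ p.2}
      (fun p => Real.log (1 + p.1 * h1)
        + Real.log (1 + p.2 * h2 / (p.1 * h2 + 1))) := by
  have hQ : Convex ℝ {p : ℝ × ℝ | 0 ≤ p.1 ∧ 0 ≤ p.2} := (convex_Ici 0).prod (convex_Ici 0)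
  have htotal : ConcaveOn ℝ {p : ℝ × ℝ | 0 ≤ p.1 ∧ 0 ≤ p.2}
      fun p => log (1 + (p.1 + p.2) * h2) :=
    ((concaveOn_log_one_add_mul hh2.le).comp_linearMap
      (LinearMap.fst ℝ ℝ ℝ + LinearMap.snd ℝ ℝ ℝ)).subset
      (fun p hp => add_nonneg hp.1 hp.2) hQ
  have hgain : ConcaveOn ℝ {p : ℝ × ℝ | 0 ≤ p.1 ∧ 0 ≤ p.2}
      fun p => log (1 + p.1 * h1) - log (1 + p.1 * h2) :=
    ((concaveOn_log_one_add_mul_sub hh2.le hle).comp_linearMap (LinearMap.fst ℝ ℝ ℝ)).subset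
      (fun p hp => hp.1) hQ
  refine (htotal.add hgain).congr fun p ⟨hp1, hp2⟩ => ?_
  rw [Pi.add_apply, log_one_add_div_eq_sub (by positivity) (by positivity)]
  ring_nf
end

section
/- For N subchannels with gains H_n > 0, box constraints q_n ∈ [a_n, b_n] with a_n ≤ b_n, and total power P with ∑a_n ≤ P ≤ ∑b_n, the maximizer of ∑_n log(1+q_nH_n) subject to ∑ q_n = P is characterized by: there exists ν > 0 with q_n* = clamp(1/ν − 1/H_n, a_n, b_n) for all n, where clamp(x,a,b) = max(a, min(x,b)). -/
/-- Box-constrained water-filling: any maximizer has the clamped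
water-filling form for some water level `ν > 0`. -/
theorem box_water_filling_characterization
    (N : ℕ) (H a b : Fin N → ℝ) (hH : ∀ n, 0 < H n)
    (hab : ∀ n, a n ≤ b n) (ha : ∀ n, 0 ≤ a n)
    (P : ℝ) (hPl : (∑ n, a n) ≤ P) (hPu : P ≤ ∑ n, b n) :
    ∀ qstar : Fin N → ℝ,
      ((∑ n, qstar n) = P ∧ ∀ n, qstar n ∈ Set.Icc (a n) (b n)) →
      (∀ q : Fin N → ℝ,
        ((∑ n, q n) = P ∧ ∀ n, q n ∈ Set.Icc (a n) (b n)) →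
        (∑ n, Real.log (1 + q n * H n))
          ≤ ∑ n, Real.log (1 + qstar n * H n)) →
      ∃ ν : ℝ, 0 < ν ∧
        ∀ n, qstar n = max (a n) (min (1 / ν - 1 / H n) (b n)) := by
  classical
  rintro qstar ⟨hsum, hbox⟩ hmax
  have hinv : ∀ n, 0 < 1 / H n := fun n => one_div_pos.mpr (hH n)
  have hq0 : ∀ n, 0 ≤ qstar n := fun n => le_trans (ha n) (hbox n).1
  have hwpos : ∀ n, 0 < qstar n + 1 / H n := fun n => by
    have := hq0 n; have := hinv n; linarith
  -- Key exchange lemma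
  have key : ∀ m n, qstar m < b m → a n < qstar n →
      qstar n + 1 / H n ≤ qstar m + 1 / H m := by
    intro m n hm hn
    by_contra hlt
    push_neg at hlt
    have hmn : m ≠ n := by rintro rfl; exact lt_irrefl _ hlt
    set ε := min (min (b m - qstar m) (qstar n - a n))
      (((qstar n + 1 / H n) - (qstar m + 1 / H m)) / 2) with hε
    have hε0 : 0 < ε :=
      lt_min (lt_min (by linarith) (by linarith)) (by linarith)
    have hε1 : ε ≤ b m - qstar m := le_trans (min_le_left _ _) (min_le_left _ _)
    have hε2 : ε ≤ qstar n - a n := le_trans (min_le_left _ _) (min_le_right _ _)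
    have hε3 : ε ≤ ((qstar n + 1 / H n) - (qstar m + 1 / H m)) / 2 :=
      min_le_right _ _
    set q : Fin N → ℝ := fun k =>
      qstar k + (if k = m then ε else 0) + (if k = n then -ε else 0) with hq
    have hqm : q m = qstar m + ε := by simp [hq, hmn]
    have hqn : q n = qstar n - ε := by
      simp [hq, Ne.symm hmn]; ring
    have hqk : ∀ k, k ≠ m → k ≠ n → q k = qstar k := by
      intro k h1 h2; simp [hq, h1, h2]
    have hsq : (∑ k, q k) = P := by
      simp only [hq, Finset.sum_add_distrib]
      rw [Finset.sum_ite_eq' Finset.univ m (fun _ => ε),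
        Finset.sum_ite_eq' Finset.univ n (fun _ => -ε)]
      simp [hsum]
    have hbq : ∀ k, q k ∈ Set.Icc (a k) (b k) := by
      intro k
      by_cases h1 : k = m
      · subst h1; rw [hqm]
        exact ⟨by linarith [(hbox k).1], by linarith⟩
      by_cases h2 : k = n
      · subst h2; rw [hqn]
        exact ⟨by linarith, by linarith [(hbox k).2]⟩
      · rw [hqk k h1 h2]; exact hbox k
    have hcon := hmax q ⟨hsq, hbq⟩
    -- positivity of terms
    have hA : 0 < 1 + qstar m * H m := by nlinarith [hq0 m, hH m]
    have hB : 0 < 1 + qstar n * H n := by nlinarith [hq0 n, hH n]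
    have hA' : 0 < 1 + q m * H m := by
      rw [hqm]; nlinarith [hq0 m, hH m, hε0]
    have hB' : 0 < 1 + q n * H n := by
      rw [hqn]; nlinarith [hH n, ha n]
    -- product inequality
    have F1 : H m * (1 / H m) = 1 := by
      rw [mul_one_div, div_self (ne_of_gt (hH m))]
    have F2 : H n * (1 / H n) = 1 := by
      rw [mul_one_div, div_self (ne_of_gt (hH n))]
    have hkey2 : 0 < ε * (H m * H n) *
        ((qstar n + 1 / H n) - (qstar m + 1 / H m) - ε) :=
      mul_pos (mul_pos hε0 (mul_pos (hH m) (hH n))) (by linarith)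
    have hprod : (1 + qstar m * H m) * (1 + qstar n * H n)
        < (1 + q m * H m) * (1 + q n * H n) := by
      rw [hqm, hqn]
      have heq : (1 + (qstar m + ε) * H m) * (1 + (qstar n - ε) * H n)
          - (1 + qstar m * H m) * (1 + qstar n * H n)
          = ε * (H m * H n) *
            ((qstar n + 1 / H n) - (qstar m + 1 / H m) - ε)
            - ε * H m * (H n * (1 / H n) - 1)
            + ε * H n * (H m * (1 / H m) - 1) := by ring
      rw [F1, F2] at heq
      linarith [hkey2]
    have hlog := Real.log_lt_log (mul_pos hA hB) hprod
    rw [Real.log_mul (ne_of_gt hA) (ne_of_gt hB),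
      Real.log_mul (ne_of_gt hA') (ne_of_gt hB')] at hlog
    -- sum difference is concentrated at m and n
    have hfs : (∑ k, (Real.log (1 + q k * H k) - Real.log (1 + qstar k * H k)))
        = (Real.log (1 + q m * H m) - Real.log (1 + qstar m * H m))
          + (Real.log (1 + q n * H n) - Real.log (1 + qstar n * H n)) := by
      rw [← Finset.sum_subset (Finset.subset_univ ({m, n} : Finset (Fin N)))]
      · rw [Finset.sum_insert (by simp [hmn]), Finset.sum_singleton]
      · intro k _ hk
        simp only [Finset.mem_insert, Finset.mem_singleton] at hk
        push_neg at hk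
        rw [hqk k hk.1 hk.2]; ring
    rw [Finset.sum_sub_distrib] at hfs
    linarith
  -- choose the water level t = 1/ν
  have hex : ∃ t : ℝ, 0 < t ∧ (∀ n, a n < qstar n → qstar n + 1 / H n ≤ t) ∧
      (∀ n, qstar n < b n → t ≤ qstar n + 1 / H n) := by
    by_cases h2 : ∃ k, qstar k < b k
    · obtain ⟨k0, hk0⟩ := h2
      have hne : (Finset.univ.filter (fun n => qstar n < b n)).Nonempty :=
        ⟨k0, Finset.mem_filter.mpr ⟨Finset.mem_univ _, hk0⟩⟩
      refine ⟨(Finset.univ.filter (fun n => qstar n < b n)).inf' hne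
        (fun n => qstar n + 1 / H n), ?_, ?_, ?_⟩
      · exact (Finset.lt_inf'_iff hne).mpr (fun y _ => hwpos y)
      · intro n hn
        exact Finset.le_inf' hne _
          (fun m hm => key m n (Finset.mem_filter.mp hm).2 hn)
      · intro n hn
        have hmem : n ∈ Finset.univ.filter (fun k => qstar k < b k) :=
          Finset.mem_filter.mpr ⟨Finset.mem_univ n, hn⟩
        exact Finset.inf'_le (fun k => qstar k + 1 / H k) hmem
    · push_neg at h2
      by_cases h1 : ∃ k, a k < qstar k
      · obtain ⟨k0, hk0⟩ := h1
        have hne : (Finset.univ.filter (fun n => a n < qstar n)).Nonempty :=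
          ⟨k0, Finset.mem_filter.mpr ⟨Finset.mem_univ _, hk0⟩⟩
        refine ⟨(Finset.univ.filter (fun n => a n < qstar n)).sup' hne
          (fun n => qstar n + 1 / H n), ?_, ?_, ?_⟩
        · have hmem : k0 ∈ Finset.univ.filter (fun k => a k < qstar k) :=
            Finset.mem_filter.mpr ⟨Finset.mem_univ k0, hk0⟩
          exact lt_of_lt_of_le (hwpos k0)
            (Finset.le_sup' (fun k => qstar k + 1 / H k) hmem)
        · intro n hn
          have hmem : n ∈ Finset.univ.filter (fun k => a k < qstar k) :=
            Finset.mem_filter.mpr ⟨Finset.mem_univ n, hn⟩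
          exact Finset.le_sup' (fun k => qstar k + 1 / H k) hmem
        · intro n hn; exact absurd hn (not_lt.mpr (h2 n))
      · push_neg at h1
        exact ⟨1, one_pos, fun n hn => absurd hn (not_lt.mpr (h1 n)),
          fun n hn => absurd hn (not_lt.mpr (h2 n))⟩
  obtain ⟨t, ht0, hup, hlow⟩ := hex
  refine ⟨1 / t, by positivity, fun n => ?_⟩
  rw [one_div_one_div]
  have h1n := (hbox n).1
  have h2n := (hbox n).2
  have hin := hinv n
  rcases eq_or_lt_of_le h1n with hlo | hlo
  · -- qstar n = a n
    have hm : min (t - 1 / H n) (b n) ≤ a n := by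
      rcases eq_or_lt_of_le h2n with hhi | hhi
      · exact le_trans (min_le_right _ _) (by linarith)
      · have := hlow n hhi
        exact le_trans (min_le_left _ _) (by linarith)
    rw [max_eq_left hm]; linarith
  · have hub := hup n hlo
    rcases eq_or_lt_of_le h2n with hhi | hhi
    · rw [min_eq_right (by linarith), max_eq_right (hab n)]; linarith
    · have hlb := hlow n hhi
      have hteq : t - 1 / H n = qstar n := by linarith
      rw [hteq, min_eq_left (le_of_lt hhi), max_eq_right (le_of_lt hlo)]
end
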